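/- Omori–Yau maximum principle on Euclidean space (supremum version): Let n ≥ 1 and let u : ℝⁿ → ℝ be a C² function with u* = sup u < +∞. Then there exists a sequence of points (x_k), k ∈ ℕ (k ≥ 1), in ℝⁿ such that for each k: (i) u(x_k) > u* − 1/k, (ii) ‖∇u(x_k)‖ < 1/k, and (iii) Δu(x_k) < 1/k. -/

import Mathlib

/-- The Euclidean Laplacian of `u : ℝⁿ → ℝ`, defined as the trace of the Hessian,
i.e. the sum of the second derivatives in the directions of the standard
orthonormal basis. -/
noncomputable def euclideanLaplacian {n : ℕ} (u : EuclideanSpace ℝ (Fin n) → ℝ)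
    (x : EuclideanSpace ℝ (Fin n)) : ℝ :=
  ∑ i : Fin n,
    iteratedFDeriv ℝ 2 u x ![EuclideanSpace.single i 1, EuclideanSpace.single i 1]

/-!
Perturb `u` by a small multiple of `φ x = log (1 + ‖x‖ ^ 2)`. Since `φ` is coercive, `u - ε φ`
attains a global maximum at some `x₀`, while `‖Dφ‖ ≤ 1` and `D²φ (v, v) ≤ 2 ‖v‖ ^ 2` everywhere.
The first- and second-order conditions at `x₀` then give `‖Du x₀‖ ≤ ε` and
`D²u x₀ (v, v) ≤ 2 ε ‖v‖ ^ 2`, so `Δu x₀ ≤ 2 n ε`; comparing with a point `y` where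
`u y > sup u - δ / 2` gives `u x₀ ≥ u y - ε φ y > sup u - δ` once `ε φ y < δ / 2`.
-/

open Filter Set Topology RealInnerProductSpace

theorem IsLocalMax.deriv_deriv_nonpos {f : ℝ → ℝ} {a : ℝ} (h : IsLocalMax f a)
    (hf : ContinuousAt f a) : deriv (deriv f) a ≤ 0 := by
  by_contra! hpos
  -- `f` would also have a local minimum at `a`, hence be locally constant there.
  have hmin : IsLocalMin f a := isLocalMin_of_deriv_deriv_pos hpos h.deriv_eq_zero hf
  have hconst : f =ᶠ[𝓝 a] fun _ => f a :=
    (h.and hmin).mono fun _ hx => le_antisymm hx.1 hx.2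
  have hzero : deriv (deriv f) a = 0 := by
    rw [(hconst.deriv.trans (Eventually.of_forall fun _ => deriv_const _ _)).deriv_eq]
    exact deriv_const _ _
  exact hpos.ne' hzero

section Slice

variable {E : Type*} [NormedAddCommGroup E] [NormedSpace ℝ E]

theorem hasDerivAt_add_smul (x v : E) (t : ℝ) : HasDerivAt (fun s : ℝ => x + s • v) v t := by
  simpa using ((hasDerivAt_id t).smul_const v).const_add x

theorem deriv_deriv_comp_add_smul {f : E → ℝ} (hf : ContDiff ℝ 2 f) (x v : E) :
    deriv (deriv fun t : ℝ => f (x + t • v)) 0 = iteratedFDeriv ℝ 2 f x ![v, v] := by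
  have hderiv : deriv (fun t : ℝ => f (x + t • v)) = fun t => fderiv ℝ f (x + t • v) v :=
    funext fun t => ((hf.differentiable two_ne_zero _).hasFDerivAt.comp_hasDerivAt t
      (hasDerivAt_add_smul x v t)).deriv
  have hf' : Differentiable ℝ (fderiv ℝ f) := (hf.fderiv_right le_rfl).differentiable one_ne_zero
  have h2 : HasDerivAt (fun t : ℝ => fderiv ℝ f (x + t • v)) (fderiv ℝ (fderiv ℝ f) x v) 0 := by
    have hx : HasFDerivAt (fderiv ℝ f) (fderiv ℝ (fderiv ℝ f) x) (x + (0:ℝ) • v) := by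
      simpa using (hf' x).hasFDerivAt
    exact hx.comp_hasDerivAt 0 (hasDerivAt_add_smul x v 0)
  rw [hderiv, iteratedFDeriv_two_apply]
  simpa using (h2.clm_apply (hasDerivAt_const 0 v)).deriv

theorem IsLocalMax.iteratedFDeriv_two_nonpos {f : E → ℝ} {x : E} (h : IsLocalMax f x)
    (hf : ContDiff ℝ 2 f) (v : E) : iteratedFDeriv ℝ 2 f x ![v, v] ≤ 0 := by
  rw [← deriv_deriv_comp_add_smul hf]
  have hline : Continuous fun t : ℝ => x + t • v := by fun_prop
  refine IsLocalMax.deriv_deriv_nonpos ?_ (hf.continuous.comp hline).continuousAt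
  exact IsLocalMax.comp_continuous (g := fun t : ℝ => x + t • v) (by simpa using h)
    hline.continuousAt

end Slice

section LogOnePlusNormSq

variable {E : Type*} [NormedAddCommGroup E]

noncomputable def logOnePlusNormSq (x : E) : ℝ := Real.log (1 + ‖x‖ ^ 2)

theorem logOnePlusNormSq_nonneg (x : E) : 0 ≤ logOnePlusNormSq x :=
  Real.log_nonneg (by simp [sq_nonneg ‖x‖])

theorem contDiff_logOnePlusNormSq [InnerProductSpace ℝ E] {n : WithTop ℕ∞} :
    ContDiff ℝ n (logOnePlusNormSq (E := E)) :=
  (contDiff_const.add (contDiff_norm_sq ℝ)).log fun x => by positivity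

theorem tendsto_logOnePlusNormSq_cocompact [ProperSpace E] :
    Tendsto (logOnePlusNormSq (E := E)) (cocompact E) atTop :=
  (Real.tendsto_log_atTop.comp <| tendsto_atTop_add_const_left _ 1 <|
    tendsto_pow_atTop two_ne_zero).comp tendsto_norm_cocompact_atTop

theorem norm_fderiv_logOnePlusNormSq_le [InnerProductSpace ℝ E] (x : E) :
    ‖fderiv ℝ logOnePlusNormSq x‖ ≤ 1 := by
  have hq : 0 < 1 + ‖x‖ ^ 2 := by positivity
  have h : HasFDerivAt logOnePlusNormSq ((1 + ‖x‖ ^ 2)⁻¹ • (2 : ℝ) • innerSL ℝ x) x := by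
    have := (((hasFDerivAt_id x).norm_sq).const_add 1).log hq.ne'
    rw [← Nat.cast_smul_eq_nsmul ℝ] at this
    exact_mod_cast this
  rw [h.fderiv, norm_smul, norm_smul, innerSL_apply_norm, Real.norm_eq_abs, Real.norm_eq_abs,
    abs_of_pos (inv_pos.2 hq), abs_two, inv_mul_le_iff₀ hq]
  nlinarith [sq_nonneg (‖x‖ - 1)]

theorem iteratedFDeriv_two_logOnePlusNormSq_le [InnerProductSpace ℝ E] (x v : E) :
    iteratedFDeriv ℝ 2 logOnePlusNormSq x ![v, v] ≤ 2 * ‖v‖ ^ 2 := by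
  rw [← deriv_deriv_comp_add_smul contDiff_logOnePlusNormSq]
  set q : ℝ → ℝ := fun t => 1 + ‖x + t • v‖ ^ 2
  have hq (t : ℝ) : HasDerivAt q (2 * ⟪x + t • v, v⟫) t :=
    (hasDerivAt_add_smul x v t).norm_sq.const_add 1
  have hinner (t : ℝ) : HasDerivAt (fun s : ℝ => ⟪x + s • v, v⟫) (‖v‖ ^ 2) t := by
    simpa [real_inner_self_eq_norm_sq] using
      (hasDerivAt_add_smul x v t).inner ℝ (hasDerivAt_const t v)
  have hderiv : deriv (fun t : ℝ => logOnePlusNormSq (x + t • v))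
      = fun t => 2 * ⟪x + t • v, v⟫ / q t :=
    funext fun t => ((hq t).log (by positivity)).deriv
  rw [hderiv, (((hinner 0).const_mul 2).fun_div (hq 0) (by positivity)).deriv]
  have hx : 0 ≤ ‖x‖ ^ 2 := sq_nonneg _
  simp only [q, zero_smul, add_zero]
  rw [div_le_iff₀ (by positivity)]
  nlinarith [mul_nonneg (mul_nonneg (sq_nonneg ‖v‖) hx) (by linarith : 0 ≤ 1 + ‖x‖ ^ 2),
    sq_nonneg ⟪x, v⟫]

end LogOnePlusNormSq

theorem exists_forall_sub_mul_le_of_tendsto_cocompact {X : Type*} [TopologicalSpace X]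
    [Nonempty X] {u φ : X → ℝ} (hu : Continuous u) (hbd : BddAbove (range u)) (hφ : Continuous φ)
    (hφ_top : Tendsto φ (cocompact X) atTop) {ε : ℝ} (hε : 0 < ε) :
    ∃ x₀, ∀ y, u y - ε * φ y ≤ u x₀ - ε * φ x₀ := by
  obtain ⟨S, hS⟩ := hbd
  refine (hu.sub (continuous_const.mul hφ)).exists_forall_ge ?_
  refine tendsto_atBot_mono (fun y => sub_le_sub_right (hS (mem_range_self y)) _) ?_
  exact tendsto_atBot_add_const_left _ S
    (tendsto_neg_atTop_atBot.comp (hφ_top.const_mul_atTop hε))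

theorem exists_almost_max_of_contDiff {E : Type*} [NormedAddCommGroup E] [InnerProductSpace ℝ E]
    [ProperSpace E] {u : E → ℝ} (hu : ContDiff ℝ 2 u) (hbd : BddAbove (range u)) {δ : ℝ}
    (hδ : 0 < δ) :
    ∃ x, sSup (range u) - δ < u x ∧ ‖fderiv ℝ u x‖ < δ ∧
      ∀ v, iteratedFDeriv ℝ 2 u x ![v, v] ≤ δ * ‖v‖ ^ 2 := by
  set φ : E → ℝ := logOnePlusNormSq
  have hφ : ContDiff ℝ 2 φ := contDiff_logOnePlusNormSq
  obtain ⟨_, ⟨y, rfl⟩, hy⟩ :=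
    exists_lt_of_lt_csSup (range_nonempty u) (sub_lt_self _ (half_pos hδ))
  have hφy : 0 ≤ φ y := logOnePlusNormSq_nonneg y
  set ε := δ / (2 * (1 + φ y))
  have hε : 0 < ε := by positivity
  have hεδ : 2 * ε ≤ δ := by
    rw [mul_div_assoc', div_le_iff₀ (by positivity)]
    nlinarith
  have hεφy : ε * φ y < δ / 2 := by
    rw [div_mul_eq_mul_div, div_lt_iff₀ (by positivity)]
    nlinarith
  obtain ⟨x₀, hx₀⟩ := exists_forall_sub_mul_le_of_tendsto_cocompact hu.continuous hbd hφ.continuous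
    tendsto_logOnePlusNormSq_cocompact hε
  have hmax : IsLocalMax (u - ε • φ) x₀ := Eventually.of_forall hx₀
  refine ⟨x₀, ?_, ?_, fun v => ?_⟩
  · nlinarith [hx₀ y, logOnePlusNormSq_nonneg x₀]
  · have hdu : fderiv ℝ u x₀ = ε • fderiv ℝ φ x₀ :=
      sub_eq_zero.1 <| hmax.hasFDerivAt_eq_zero <|
        (hu.differentiable two_ne_zero x₀).hasFDerivAt.sub
          ((hφ.differentiable two_ne_zero x₀).hasFDerivAt.const_smul ε)
    calc ‖fderiv ℝ u x₀‖ = ε * ‖fderiv ℝ φ x₀‖ := by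
          rw [hdu, norm_smul, Real.norm_of_nonneg hε.le]
      _ ≤ ε * 1 := by gcongr; exact norm_fderiv_logOnePlusNormSq_le x₀
      _ < δ := by linarith
  · have hεφ : ContDiff ℝ 2 (ε • φ) := hφ.const_smul ε
    have h := hmax.iteratedFDeriv_two_nonpos (hu.sub hεφ) v
    rw [iteratedFDeriv_sub_apply hu.contDiffAt hεφ.contDiffAt,
      iteratedFDeriv_const_smul_apply hφ.contDiffAt] at h
    have hφv := iteratedFDeriv_two_logOnePlusNormSq_le x₀ v
    simp only [sub_apply, smul_apply, smul_eq_mul] at h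
    nlinarith [mul_le_mul_of_nonneg_left hφv hε.le, mul_le_mul_of_nonneg_right hεδ (sq_nonneg ‖v‖)]

theorem norm_gradient_eq_norm_fderiv {F : Type*} [NormedAddCommGroup F] [InnerProductSpace ℝ F]
    [CompleteSpace F] (f : F → ℝ) (x : F) : ‖gradient f x‖ = ‖fderiv ℝ f x‖ :=
  (InnerProductSpace.toDual ℝ F).symm.norm_map _

theorem euclideanLaplacian_le {n : ℕ} {u : EuclideanSpace ℝ (Fin n) → ℝ}
    {x : EuclideanSpace ℝ (Fin n)} {c : ℝ}
    (h : ∀ v, iteratedFDeriv ℝ 2 u x ![v, v] ≤ c * ‖v‖ ^ 2) :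
    euclideanLaplacian u x ≤ n * c :=
  calc euclideanLaplacian u x ≤ ∑ _i : Fin n, c :=
        Finset.sum_le_sum fun i _ => by simpa using h (EuclideanSpace.single i 1)
    _ = n * c := by simp

theorem omori_yau_sup_general {n : ℕ}
    (u : EuclideanSpace ℝ (Fin n) → ℝ) (hu : ContDiff ℝ 2 u)
    (hbd : BddAbove (Set.range u)) :
    ∃ x : ℕ → EuclideanSpace ℝ (Fin n), ∀ k : ℕ, 1 ≤ k →
      (sSup (Set.range u) - 1 / (k : ℝ) < u (x k)) ∧
      ‖gradient u (x k)‖ < 1 / (k : ℝ) ∧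
      euclideanLaplacian u (x k) < 1 / (k : ℝ) := by
  have hx : ∀ k : ℕ, ∃ x, 1 ≤ k → (sSup (Set.range u) - 1 / (k : ℝ) < u x) ∧
      ‖gradient u x‖ < 1 / (k : ℝ) ∧ euclideanLaplacian u x < 1 / (k : ℝ) := by
    intro k
    rcases Nat.eq_zero_or_pos k with rfl | hk
    · exact ⟨0, by simp⟩
    have hk' : (0 : ℝ) < k := Nat.cast_pos.2 hk
    have hδk : 1 / ((n + 1) * k : ℝ) ≤ 1 / k := by gcongr; nlinarith
    obtain ⟨x, hval, hgrad, hhess⟩ :=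
      exists_almost_max_of_contDiff hu hbd (δ := 1 / ((n + 1) * k)) (by positivity)
    refine ⟨x, fun _ => ⟨by linarith, ?_, ?_⟩⟩
    · rw [norm_gradient_eq_norm_fderiv]; linarith
    · calc euclideanLaplacian u x ≤ n * (1 / ((n + 1) * k)) := euclideanLaplacian_le hhess
        _ < 1 / k := by
          rw [mul_one_div, div_lt_div_iff₀ (by positivity) (by positivity)]; linarith
  choose x hx using hx
  exact ⟨x, hx⟩

/-- Omori–Yau maximum principle on Euclidean space (supremum version): if
`u : ℝⁿ → ℝ` is `C²` and bounded above, with supremum `u*`, then there is a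
sequence of points `x k` with `u (x k) > u* - 1/k`, `‖∇u (x k)‖ < 1/k` and
`Δu (x k) < 1/k` for every `k ≥ 1`. -/
theorem omori_yau_sup {n : ℕ} (hn : 1 ≤ n)
    (u : EuclideanSpace ℝ (Fin n) → ℝ) (hu : ContDiff ℝ 2 u)
    (hbd : BddAbove (Set.range u)) :
    ∃ x : ℕ → EuclideanSpace ℝ (Fin n), ∀ k : ℕ, 1 ≤ k →
      (sSup (Set.range u) - 1 / (k : ℝ) < u (x k)) ∧
      ‖gradient u (x k)‖ < 1 / (k : ℝ) ∧
      euclideanLaplacian u (x k) < 1 / (k : ℝ) :=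
  omori_yau_sup_general u hu hbd
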